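/- arXiv:1502.06465 — 4 statements merged into one kernel-verified Lean document; each statement's English description precedes it below -/
import Mathlib

section
/- Let φ : X → ℝ be 1-Lipschitz on a metric space (X,d) and Γ := {(x,y) : φ(x) − φ(y) = d(x,y)}. Let Δ ⊆ Γ be any set such that for all (x₀,y₀), (x₁,y₁) ∈ Δ one has (φ(y₁) − φ(y₀))·(φ(x₁) − φ(x₀)) ≥ 0. Then Δ is d²-cyclically monotone: for any finite family (x₁,y₁),…,(x_N,y_N) ∈ Δ, ∑_{i=1}^N d(x_i,y_i)² ≤ ∑_{i=1}^N d(x_i,y_{i+1})², with y_{N+1} := y₁. -/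
/-!
Put `a i = φ (x i)` and `b i = φ (y i)`. On `Γ` the cost `d(xᵢ, yᵢ)` equals `aᵢ - bᵢ`, while
by the Lipschitz bound `d(xᵢ, yᵢ₊₁) ≥ |aᵢ - bᵢ₊₁|`. The hypothesis on `Δ` says that `a` and `b`
monovary, so by the rearrangement inequality the cyclic shift of `b` can only decrease `∑ aᵢ bᵢ`,
i.e. increase `∑ (aᵢ - bᵢ)²`.
-/

open Finset

theorem Monovary.sum_sub_sq_le_sum_sub_comp_perm_sq {ι α : Type*} [Fintype ι] [CommRing α]
    [LinearOrder α] [IsStrictOrderedRing α] {f g : ι → α} (hfg : Monovary f g)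
    (σ : Equiv.Perm ι) :
    ∑ i, (f i - g i) ^ 2 ≤ ∑ i, (f i - g (σ i)) ^ 2 := by
  have hperm : ∑ i, g (σ i) ^ 2 = ∑ i, g i ^ 2 := Equiv.sum_comp σ fun i => g i ^ 2
  have hrearr : ∑ i, f i * g (σ i) ≤ ∑ i, f i * g i := hfg.sum_mul_comp_perm_le_sum_mul
  simp only [sub_sq, mul_assoc, sum_add_distrib, sum_sub_distrib, ← mul_sum, hperm]
  linarith

theorem LipschitzWith.sq_sub_le_dist_sq {X : Type*} [PseudoMetricSpace X] {φ : X → ℝ}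
    (hφ : LipschitzWith 1 φ) (x y : X) : (φ x - φ y) ^ 2 ≤ dist x y ^ 2 := by
  have h : |φ x - φ y| ≤ dist x y := by
    simpa [Real.dist_eq] using hφ.dist_le_mul x y
  exact sq_le_sq' (abs_le.mp h).1 (abs_le.mp h).2

/-- If Δ ⊆ Γ = {(x,y) : φ(x) − φ(y) = d(x,y)} (φ 1-Lipschitz) and for all
(x₀,y₀),(x₁,y₁) ∈ Δ one has (φ(y₁)−φ(y₀))(φ(x₁)−φ(x₀)) ≥ 0, then Δ is d²-cyclically
monotone. -/
theorem stmt_2 {X : Type*} [MetricSpace X] (φ : X → ℝ) (hφ : LipschitzWith 1 φ)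
    (Δ : Set (X × X))
    (hΔΓ : ∀ p ∈ Δ, φ p.1 - φ p.2 = dist p.1 p.2)
    (hmono : ∀ p ∈ Δ, ∀ q ∈ Δ, 0 ≤ (φ q.2 - φ p.2) * (φ q.1 - φ p.1))
    (N : ℕ) (x y : Fin (N + 1) → X) (h : ∀ i, (x i, y i) ∈ Δ) :
    ∑ i, dist (x i) (y i) ^ 2 ≤ ∑ i, dist (x i) (y (i + 1)) ^ 2 := by
  have hmv : Monovary (fun i => φ (x i)) (fun i => φ (y i)) :=
    monovary_iff_forall_mul_nonneg.2 fun i j => by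
      rw [mul_comm]
      exact hmono _ (h i) _ (h j)
  calc ∑ i, dist (x i) (y i) ^ 2 = ∑ i, (φ (x i) - φ (y i)) ^ 2 := by
        simp only [fun i => hΔΓ _ (h i)]
    _ ≤ ∑ i, (φ (x i) - φ (y (Equiv.addRight 1 i))) ^ 2 :=
        hmv.sum_sub_sq_le_sum_sub_comp_perm_sq _
    _ ≤ ∑ i, dist (x i) (y (i + 1)) ^ 2 :=
        sum_le_sum fun i _ => hφ.sq_sub_le_dist_sq _ _
end

section
/- Let N ∈ (1,∞), K ∈ ℝ, and let h : I → (0,∞) be a C² function on an open interval I ⊆ ℝ. Then h satisfies the differential inequality (h^{1/(N−1)})'' + (K/(N−1)) h^{1/(N−1)} ≤ 0 on I if and only if h satisfies the convexity inequality h((1−s)t₀ + s t₁)^{1/(N−1)} ≥ σ_{K,N−1}^{(1−s)}(t₁−t₀) h(t₀)^{1/(N−1)} + σ_{K,N−1}^{(s)}(t₁−t₀) h(t₁)^{1/(N−1)} for all t₀,t₁ ∈ I with t₀ < t₁ and all s ∈ [0,1]. -/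
/-!
Put `u = h ^ (1 / (N - 1))` and `κ = K / (N - 1)`. When `κ θ² < π²` for `θ = t₁ - t₀`, the
right-hand side `σ^{(1-s)}(θ) u(t₀) + σ^{(s)}(θ) u(t₁)` is the value at `(1 - s) t₀ + s t₁` of the
solution `v` of `v'' + κ v = 0` with the boundary values of `u`, so the convexity inequality says
`v ≤ u` on `[t₀, t₁]`. For a supersolution `u'' + κ u ≤ 0` this is Sturm comparison: the Wronskian
of `u - v` with a positive solution is antitone. The Wronskian of `u` with `sin (√κ (t - t₀))`
shows that a positive supersolution never sees `κ θ² ≥ π²`, where σ would be `∞`. Conversely, if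
`u'' + κ u > 0` at a point, comparison on a small interval around it also gives `u ≤ v`, so
`u = v` there and `u'' + κ u = 0`.
-/
open scoped ENNReal

/-- The distortion coefficients σ_{K,N'}^{(s)}(θ), valued in [0,∞] (⊤ when Kθ² ≥ N'π²). -/
noncomputable def sigmaCoeff (K N' s θ : ℝ) : ℝ≥0∞ :=
  if N' * Real.pi ^ 2 ≤ K * θ ^ 2 then ⊤
  else if 0 < K * θ ^ 2 then
    ENNReal.ofReal (Real.sin (s * θ * Real.sqrt (K / N')) / Real.sin (θ * Real.sqrt (K / N')))
  else if K * θ ^ 2 = 0 then ENNReal.ofReal s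
  else
    ENNReal.ofReal (Real.sinh (s * θ * Real.sqrt (-K / N')) / Real.sinh (θ * Real.sqrt (-K / N')))

/-- The synthetic CD(K,N) convexity inequality for a one-dimensional density h on a set I. -/
def CDconv (K N : ℝ) (I : Set ℝ) (h : ℝ → ℝ) : Prop :=
  ∀ t₀ ∈ I, ∀ t₁ ∈ I, t₀ < t₁ → ∀ s ∈ Set.Icc (0:ℝ) 1,
    sigmaCoeff K (N-1) (1-s) (t₁ - t₀) * ENNReal.ofReal (h t₀ ^ (1/(N-1))) +
      sigmaCoeff K (N-1) s (t₁ - t₀) * ENNReal.ofReal (h t₁ ^ (1/(N-1))) ≤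
    ENNReal.ofReal (h ((1-s) * t₀ + s * t₁) ^ (1/(N-1)))

open Set Real

noncomputable section

def sinK (κ x : ℝ) : ℝ :=
  if 0 < κ then sin (√κ * x) / √κ
  else if κ = 0 then x
  else sinh (√(-κ) * x) / √(-κ)

def cosK (κ x : ℝ) : ℝ :=
  if 0 < κ then cos (√κ * x)
  else if κ = 0 then 1
  else cosh (√(-κ) * x)

end

section sinK

variable {κ x : ℝ}

@[simp]
lemma sinK_zero (κ : ℝ) : sinK κ 0 = 0 := by
  simp [sinK]

@[simp]
lemma cosK_zero (κ : ℝ) : cosK κ 0 = 1 := by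
  simp [cosK]

lemma hasDerivAt_sinK (κ x : ℝ) : HasDerivAt (sinK κ) (cosK κ x) x := by
  unfold sinK cosK
  split_ifs with hpos hzero
  · have hr : √κ ≠ 0 := (sqrt_pos.2 hpos).ne'
    exact ((((hasDerivAt_id' x).const_mul √κ).sin).div_const √κ).congr_deriv (by field_simp)
  · exact hasDerivAt_id' x
  · have hr : √(-κ) ≠ 0 := (sqrt_pos.2 (by grind)).ne'
    exact ((((hasDerivAt_id' x).const_mul √(-κ)).sinh).div_const √(-κ)).congr_deriv
      (by field_simp)

lemma hasDerivAt_cosK (κ x : ℝ) : HasDerivAt (cosK κ) (-κ * sinK κ x) x := by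
  unfold sinK cosK
  split_ifs with hpos hzero
  · have hr : √κ ≠ 0 := (sqrt_pos.2 hpos).ne'
    refine (((hasDerivAt_id' x).const_mul √κ).cos).congr_deriv ?_
    field_simp
    rw [sq_sqrt hpos.le]
    ring
  · simpa [hzero] using hasDerivAt_const x (1 : ℝ)
  · have hκ : 0 < -κ := by grind
    have hr : √(-κ) ≠ 0 := (sqrt_pos.2 hκ).ne'
    refine (((hasDerivAt_id' x).const_mul √(-κ)).cosh).congr_deriv ?_
    field_simp
    rw [sq_sqrt hκ.le]
    ring

lemma sinK_pos (hx : 0 < x) (hκx : κ * x ^ 2 < π ^ 2) : 0 < sinK κ x := by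
  unfold sinK
  split_ifs with hpos hzero
  · have hr := sqrt_pos.2 hpos
    refine div_pos (sin_pos_of_pos_of_lt_pi (by positivity) ?_) hr
    have : (√κ * x) ^ 2 < π ^ 2 := by rwa [mul_pow, sq_sqrt hpos.le]
    exact abs_lt_of_sq_lt_sq this pi_pos.le |>.trans_le' (le_abs_self _)
  · exact hx
  · have hr := sqrt_pos.2 (neg_pos.2 (lt_of_le_of_ne (not_lt.1 hpos) hzero))
    exact div_pos (sinh_pos_iff.2 (by positivity)) hr

lemma sinK_nonneg (hx : 0 ≤ x) (hκx : κ * x ^ 2 ≤ π ^ 2) : 0 ≤ sinK κ x := by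
  unfold sinK
  split_ifs with hpos hzero
  · have hr := sqrt_pos.2 hpos
    refine div_nonneg (sin_nonneg_of_nonneg_of_le_pi (by positivity) ?_) hr.le
    have : (√κ * x) ^ 2 ≤ π ^ 2 := by rwa [mul_pow, sq_sqrt hpos.le]
    exact abs_le_of_sq_le_sq' this pi_pos.le |>.2
  · exact hx
  · have hr := sqrt_pos.2 (neg_pos.2 (lt_of_le_of_ne (not_lt.1 hpos) hzero))
    exact div_nonneg (sinh_nonneg_iff.2 (by positivity)) hr.le

lemma cosK_pos (hκx : κ * x ^ 2 < (π / 2) ^ 2) : 0 < cosK κ x := by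
  unfold cosK
  split_ifs with hpos hzero
  · have : (√κ * x) ^ 2 < (π / 2) ^ 2 := by rwa [mul_pow, sq_sqrt hpos.le]
    exact cos_pos_of_mem_Ioo (abs_lt.1 (abs_lt_of_sq_lt_sq this (by positivity)))
  · exact one_pos
  · exact cosh_pos _

lemma sinK_div_sqrt (hκ : 0 < κ) : sinK κ (π / √κ) = 0 := by
  simp [sinK, hκ, mul_div_cancel₀ _ (sqrt_pos.2 hκ).ne']

lemma cosK_div_sqrt (hκ : 0 < κ) : cosK κ (π / √κ) = -1 := by
  simp [cosK, hκ, mul_div_cancel₀ _ (sqrt_pos.2 hκ).ne']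

end sinK

lemma sigmaCoeff_eq_ofReal {K N' θ : ℝ} (s : ℝ) (hN' : 0 < N') (hθ : θ ≠ 0)
    (hsmall : K / N' * θ ^ 2 < π ^ 2) :
    sigmaCoeff K N' s θ = ENNReal.ofReal (sinK (K / N') (s * θ) / sinK (K / N') θ) := by
  have hθ2 : 0 < θ ^ 2 := by positivity
  have hfin : ¬ N' * π ^ 2 ≤ K * θ ^ 2 := by
    rw [div_mul_eq_mul_div, div_lt_iff₀ hN'] at hsmall
    linarith
  rcases lt_trichotomy K 0 with hK | rfl | hK
  · have hκ : 0 < -K / N' := div_pos (neg_pos.2 hK) hN'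
    have hr : √(-K / N') ≠ 0 := (sqrt_pos.2 hκ).ne'
    simp only [sigmaCoeff, sinK, hfin, if_false,
      not_lt.2 (mul_nonpos_of_nonpos_of_nonneg hK.le hθ2.le), (mul_neg_of_neg_of_pos hK hθ2).ne,
      div_pos_iff_of_pos_right hN', not_lt.2 hK.le, div_eq_zero_iff, hK.ne, hN'.ne', or_self,
      ← neg_div]
    congr 1
    rw [div_div_div_cancel_right₀ hr, mul_comm (s * θ), mul_comm θ]
  · have : 0 < N' * π ^ 2 := by positivity
    simp [sigmaCoeff, sinK, hθ, this]
  · have hκ : 0 < K / N' := div_pos hK hN'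
    have hr : √(K / N') ≠ 0 := (sqrt_pos.2 hκ).ne'
    simp only [sigmaCoeff, sinK, hfin, if_false, mul_pos hK hθ2, if_true, hκ]
    congr 1
    rw [div_div_div_cancel_right₀ hr, mul_comm (s * θ), mul_comm θ]

lemma mul_sq_lt_of_sq_le {κ x y c : ℝ} (hc : 0 < c) (hxy : x ^ 2 ≤ y ^ 2) (h : κ * y ^ 2 < c) :
    κ * x ^ 2 < c := by
  rcases le_total κ 0 with hκ | hκ
  · nlinarith [sq_nonneg x]
  · nlinarith [mul_le_mul_of_nonneg_left hxy hκ]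

noncomputable def sinKInterp (κ t₀ t₁ y₀ y₁ t : ℝ) : ℝ :=
  (y₀ * sinK κ (t₁ - t) + y₁ * sinK κ (t - t₀)) / sinK κ (t₁ - t₀)

section sinKInterp

variable {κ t₀ t₁ y₀ y₁ : ℝ}

lemma sinKInterp_left (h : sinK κ (t₁ - t₀) ≠ 0) : sinKInterp κ t₀ t₁ y₀ y₁ t₀ = y₀ := by
  simp [sinKInterp, h]

lemma sinKInterp_right (h : sinK κ (t₁ - t₀) ≠ 0) : sinKInterp κ t₀ t₁ y₀ y₁ t₁ = y₁ := by
  simp [sinKInterp, h]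

lemma sinKInterp_neg (t : ℝ) :
    sinKInterp κ t₀ t₁ (-y₀) (-y₁) t = -sinKInterp κ t₀ t₁ y₀ y₁ t := by
  simp only [sinKInterp]
  ring

lemma exists_hasDerivAt_sinKInterp (κ t₀ t₁ y₀ y₁ : ℝ) :
    ∃ v' : ℝ → ℝ, ∀ t, HasDerivAt (sinKInterp κ t₀ t₁ y₀ y₁) (v' t) t ∧
      HasDerivAt v' (-κ * sinKInterp κ t₀ t₁ y₀ y₁ t) t := by
  refine ⟨fun t => (-(y₀ * cosK κ (t₁ - t)) + y₁ * cosK κ (t - t₀)) / sinK κ (t₁ - t₀),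
    fun t => ⟨?_, ?_⟩⟩
  · exact ((((hasDerivAt_sinK κ _).comp_const_sub t₁ t).const_mul y₀).add
      (((hasDerivAt_sinK κ _).comp_sub_const t t₀).const_mul y₁)).div_const _ |>.congr_deriv
      (by ring)
  · refine (((((hasDerivAt_cosK κ _).comp_const_sub t₁ t).const_mul y₀).neg.add
      (((hasDerivAt_cosK κ _).comp_sub_const t t₀).const_mul y₁)).div_const _).congr_deriv ?_
    simp only [sinKInterp]
    ring

lemma sinKInterp_lineMap (s : ℝ) :
    sinKInterp κ t₀ t₁ y₀ y₁ ((1 - s) * t₀ + s * t₁) =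
      sinK κ ((1 - s) * (t₁ - t₀)) / sinK κ (t₁ - t₀) * y₀ +
        sinK κ (s * (t₁ - t₀)) / sinK κ (t₁ - t₀) * y₁ := by
  rw [sinKInterp, show t₁ - ((1 - s) * t₀ + s * t₁) = (1 - s) * (t₁ - t₀) by ring,
    show (1 - s) * t₀ + s * t₁ - t₀ = s * (t₁ - t₀) by ring]
  ring

end sinKInterp

lemma sigmaCoeff_combination_eq {K N' t₀ t₁ s y₀ y₁ : ℝ} (hN' : 0 < N') (h01 : t₀ < t₁)
    (hsmall : K / N' * (t₁ - t₀) ^ 2 < π ^ 2) (hs : s ∈ Icc (0 : ℝ) 1) (hy₀ : 0 ≤ y₀)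
    (hy₁ : 0 ≤ y₁) :
    sigmaCoeff K N' (1 - s) (t₁ - t₀) * ENNReal.ofReal y₀ +
        sigmaCoeff K N' s (t₁ - t₀) * ENNReal.ofReal y₁ =
      ENNReal.ofReal (sinKInterp (K / N') t₀ t₁ y₀ y₁ ((1 - s) * t₀ + s * t₁)) := by
  have hθ : 0 < t₁ - t₀ := sub_pos.2 h01
  have hσ : ∀ r ∈ Icc (0 : ℝ) 1, 0 ≤ sinK (K / N') (r * (t₁ - t₀)) / sinK (K / N') (t₁ - t₀) := by
    intro r hr
    have hsq : (r * (t₁ - t₀)) ^ 2 ≤ (t₁ - t₀) ^ 2 := by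
      rw [mul_pow]
      exact mul_le_of_le_one_left (sq_nonneg _) (pow_le_one₀ hr.1 hr.2)
    exact div_nonneg (sinK_nonneg (by positivity [hr.1])
      (mul_sq_lt_of_sq_le (by positivity) hsq hsmall).le) (sinK_pos hθ hsmall).le
  have hσ₀ := hσ (1 - s) ⟨by linarith [hs.2], by linarith [hs.1]⟩
  have hσ₁ := hσ s hs
  rw [sigmaCoeff_eq_ofReal _ hN' hθ.ne' hsmall, sigmaCoeff_eq_ofReal _ hN' hθ.ne' hsmall,
    ← ENNReal.ofReal_mul hσ₀, ← ENNReal.ofReal_mul hσ₁,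
    ← ENNReal.ofReal_add (mul_nonneg hσ₀ hy₀) (mul_nonneg hσ₁ hy₁), sinKInterp_lineMap]

section Sturm

variable {κ t₀ t₁ : ℝ} {φ φ' w w' w'' : ℝ → ℝ}

lemma hasDerivAt_wronskian {t : ℝ} (hφ : HasDerivAt φ (φ' t) t)
    (hφ' : HasDerivAt φ' (-κ * φ t) t) (hw : HasDerivAt w (w' t) t)
    (hw' : HasDerivAt w' (w'' t) t) :
    HasDerivAt (fun t => φ t * w' t - w t * φ' t) (φ t * (w'' t + κ * w t)) t :=
  ((hφ.mul hw').sub (hw.mul hφ')).congr_deriv (by ring)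

lemma antitoneOn_wronskian (hφ : ∀ t ∈ Icc t₀ t₁, HasDerivAt φ (φ' t) t)
    (hφ' : ∀ t ∈ Icc t₀ t₁, HasDerivAt φ' (-κ * φ t) t) (hφ₀ : ∀ t ∈ Icc t₀ t₁, 0 ≤ φ t)
    (hw : ∀ t ∈ Icc t₀ t₁, HasDerivAt w (w' t) t) (hw' : ∀ t ∈ Icc t₀ t₁, HasDerivAt w' (w'' t) t)
    (hsuper : ∀ t ∈ Icc t₀ t₁, w'' t + κ * w t ≤ 0) :
    AntitoneOn (fun t => φ t * w' t - w t * φ' t) (Icc t₀ t₁) := by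
  have hW t (ht : t ∈ Icc t₀ t₁) := hasDerivAt_wronskian (hφ t ht) (hφ' t ht) (hw t ht) (hw' t ht)
  refine antitoneOn_of_hasDerivWithinAt_nonpos (f' := fun t => φ t * (w'' t + κ * w t))
    (convex_Icc t₀ t₁)
    (fun t ht => (hW t ht).continuousAt.continuousWithinAt) (fun t ht => ?_) (fun t ht => ?_)
  · rw [interior_Icc] at ht
    exact (hW t (Ioo_subset_Icc_self ht)).hasDerivWithinAt
  · rw [interior_Icc] at ht
    exact mul_nonpos_of_nonneg_of_nonpos (hφ₀ t (Ioo_subset_Icc_self ht))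
      (hsuper t (Ioo_subset_Icc_self ht))

/-- Sturm comparison: `w / φ` has derivative `W / φ ^ 2` with `W` the (antitone) Wronskian, so it
cannot dip below its boundary values `0`. -/
lemma nonneg_of_supersolution (hφ : ∀ t ∈ Icc t₀ t₁, HasDerivAt φ (φ' t) t)
    (hφ' : ∀ t ∈ Icc t₀ t₁, HasDerivAt φ' (-κ * φ t) t) (hφpos : ∀ t ∈ Icc t₀ t₁, 0 < φ t)
    (hw : ∀ t ∈ Icc t₀ t₁, HasDerivAt w (w' t) t) (hw' : ∀ t ∈ Icc t₀ t₁, HasDerivAt w' (w'' t) t)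
    (hsuper : ∀ t ∈ Icc t₀ t₁, w'' t + κ * w t ≤ 0) (hw₀ : w t₀ = 0) (hw₁ : w t₁ = 0) :
    ∀ t ∈ Icc t₀ t₁, 0 ≤ w t := by
  have hW := antitoneOn_wronskian hφ hφ' (fun t ht => (hφpos t ht).le) hw hw' hsuper
  have hq : ∀ t ∈ Icc t₀ t₁, HasDerivAt (fun t => w t / φ t)
      ((φ t * w' t - w t * φ' t) / φ t ^ 2) t := fun t ht =>
    ((hw t ht).div (hφ t ht) (hφpos t ht).ne').congr_deriv (by ring)
  intro c hc
  by_contra! hwc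
  have hc₀ : t₀ < c := hc.1.lt_of_ne (by rintro rfl; linarith)
  have hc₁ : c < t₁ := hc.2.lt_of_ne (by rintro rfl; linarith)
  have hqc : w c / φ c < 0 := div_neg_of_neg_of_pos hwc (hφpos c hc)
  obtain ⟨ξ, hξ, hqξ⟩ := exists_hasDerivAt_eq_slope (fun t => w t / φ t) _ hc₀
    (fun t ht => (hq t ⟨ht.1, ht.2.trans hc₁.le⟩).continuousAt.continuousWithinAt)
    (fun t ht => hq t ⟨ht.1.le, ht.2.le.trans hc₁.le⟩)
  obtain ⟨η, hη, hqη⟩ := exists_hasDerivAt_eq_slope (fun t => w t / φ t) _ hc₁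
    (fun t ht => (hq t ⟨hc₀.le.trans ht.1, ht.2⟩).continuousAt.continuousWithinAt)
    (fun t ht => hq t ⟨hc₀.le.trans ht.1.le, ht.2.le⟩)
  have hξmem : ξ ∈ Icc t₀ t₁ := ⟨hξ.1.le, hξ.2.le.trans hc₁.le⟩
  have hηmem : η ∈ Icc t₀ t₁ := ⟨hc₀.le.trans hη.1.le, hη.2.le⟩
  have hWξ : φ ξ * w' ξ - w ξ * φ' ξ < 0 := by
    refine neg_of_div_neg_left ?_ (sq_nonneg (φ ξ))
    rw [hqξ, hw₀, zero_div, sub_zero]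
    exact div_neg_of_neg_of_pos hqc (sub_pos.2 hc₀)
  have hWη : 0 < φ η * w' η - w η * φ' η := by
    rw [← div_pos_iff_of_pos_right (pow_pos (hφpos η hηmem) 2), hqη, hw₁, zero_div, zero_sub]
    exact div_pos (neg_pos.2 hqc) (sub_pos.2 hc₁)
  exact (hW hξmem hηmem (hξ.2.trans hη.1).le).not_gt (hWξ.trans hWη)

end Sturm

theorem sinKInterp_le_of_supersolution {κ t₀ t₁ : ℝ} {u u' u'' : ℝ → ℝ} (h01 : t₀ < t₁)
    (hsmall : κ * (t₁ - t₀) ^ 2 < π ^ 2) (hu : ∀ t ∈ Icc t₀ t₁, HasDerivAt u (u' t) t)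
    (hu' : ∀ t ∈ Icc t₀ t₁, HasDerivAt u' (u'' t) t)
    (hsuper : ∀ t ∈ Icc t₀ t₁, u'' t + κ * u t ≤ 0) :
    ∀ t ∈ Icc t₀ t₁, sinKInterp κ t₀ t₁ (u t₀) (u t₁) t ≤ u t := by
  set v := sinKInterp κ t₀ t₁ (u t₀) (u t₁)
  obtain ⟨v', hv⟩ := exists_hasDerivAt_sinKInterp κ t₀ t₁ (u t₀) (u t₁)
  have hS : sinK κ (t₁ - t₀) ≠ 0 := (sinK_pos (sub_pos.2 h01) hsmall).ne'
  obtain ⟨m, hm⟩ : ∃ m, m = (t₀ + t₁) / 2 := ⟨_, rfl⟩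
  -- `cosK` centred at the midpoint is a positive solution on the whole of `[t₀, t₁]`
  have hφpos : ∀ t ∈ Icc t₀ t₁, 0 < cosK κ (t - m) := fun t ht =>
    cosK_pos (mul_sq_lt_of_sq_le (by positivity)
      (sq_le_sq' (by linarith [ht.1]) (by linarith [ht.2]) : (t - m) ^ 2 ≤ ((t₁ - t₀) / 2) ^ 2)
      (by linarith))
  have hw := nonneg_of_supersolution (φ := fun t => cosK κ (t - m))
    (φ' := fun t => -κ * sinK κ (t - m)) (w := fun t => u t - v t)
    (w' := fun t => u' t - v' t) (w'' := fun t => u'' t + κ * v t)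
    (fun t _ => (hasDerivAt_cosK κ _).comp_sub_const t m)
    (fun t _ => (((hasDerivAt_sinK κ _).comp_sub_const t m).const_mul (-κ)))
    hφpos (fun t ht => (hu t ht).sub (hv t).1)
    (fun t ht => ((hu' t ht).sub (hv t).2).congr_deriv (by ring))
    (fun t ht => by linarith [hsuper t ht]) (by simp [v, sinKInterp_left hS])
    (by simp [v, sinKInterp_right hS])
  exact fun t ht => sub_nonneg.1 (hw t ht)

theorem le_sinKInterp_of_subsolution {κ t₀ t₁ : ℝ} {u u' u'' : ℝ → ℝ} (h01 : t₀ < t₁)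
    (hsmall : κ * (t₁ - t₀) ^ 2 < π ^ 2) (hu : ∀ t ∈ Icc t₀ t₁, HasDerivAt u (u' t) t)
    (hu' : ∀ t ∈ Icc t₀ t₁, HasDerivAt u' (u'' t) t)
    (hsub : ∀ t ∈ Icc t₀ t₁, 0 ≤ u'' t + κ * u t) :
    ∀ t ∈ Icc t₀ t₁, u t ≤ sinKInterp κ t₀ t₁ (u t₀) (u t₁) t := by
  intro t ht
  have := sinKInterp_le_of_supersolution (u := fun t => -u t) (u' := fun t => -u' t)
    (u'' := fun t => -u'' t) h01 hsmall (fun t ht => (hu t ht).neg) (fun t ht => (hu' t ht).neg)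
    (fun t ht => by linarith [hsub t ht]) t ht
  rw [sinKInterp_neg] at this
  linarith

theorem mul_sq_lt_pi_sq_of_supersolution {κ t₀ t₁ : ℝ} {u u' u'' : ℝ → ℝ} (h01 : t₀ ≤ t₁)
    (hu : ∀ t ∈ Icc t₀ t₁, HasDerivAt u (u' t) t) (hu' : ∀ t ∈ Icc t₀ t₁, HasDerivAt u' (u'' t) t)
    (hpos : ∀ t ∈ Icc t₀ t₁, 0 < u t) (hsuper : ∀ t ∈ Icc t₀ t₁, u'' t + κ * u t ≤ 0) :
    κ * (t₁ - t₀) ^ 2 < π ^ 2 := by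
  rcases le_or_gt κ 0 with hκ | hκ
  · nlinarith [pi_pos, sq_nonneg (t₁ - t₀)]
  by_contra! hlong
  set T := π / √κ
  have hT : 0 < T := div_pos pi_pos (sqrt_pos.2 hκ)
  have hκT : κ * T ^ 2 = π ^ 2 := by
    rw [div_pow, sq_sqrt hκ.le]
    field_simp
  have hTθ : T ≤ t₁ - t₀ := by
    refine (pow_le_pow_iff_left₀ hT.le ?_ two_ne_zero).1 (le_of_mul_le_mul_left ?_ hκ) <;>
      linarith
  have hsub : Icc t₀ (t₀ + T) ⊆ Icc t₀ t₁ := Icc_subset_Icc_right (by linarith)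
  have hW := antitoneOn_wronskian (φ := fun t => sinK κ (t - t₀))
    (φ' := fun t => cosK κ (t - t₀)) (w := u) (w' := u') (w'' := u'')
    (fun t _ => (hasDerivAt_sinK κ _).comp_sub_const t t₀)
    (fun t _ => (hasDerivAt_cosK κ _).comp_sub_const t t₀)
    (fun t ht => sinK_nonneg (by linarith [ht.1]) (hκT ▸ mul_le_mul_of_nonneg_left
      (sq_le_sq' (by linarith [ht.1]) (by linarith [ht.2])) hκ.le))
    (fun t ht => hu t (hsub ht)) (fun t ht => hu' t (hsub ht)) (fun t ht => hsuper t (hsub ht))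
    (left_mem_Icc.2 (by linarith)) (right_mem_Icc.2 (by linarith)) (by linarith)
  have hsinT : sinK κ T = 0 := sinK_div_sqrt hκ
  have hcosT : cosK κ T = -1 := cosK_div_sqrt hκ
  simp only [sub_self, sinK_zero, cosK_zero, add_sub_cancel_left, hsinT, hcosT] at hW
  linarith [hpos t₀ (hsub (left_mem_Icc.2 (by linarith))),
    hpos (t₀ + T) (hsub (right_mem_Icc.2 (by linarith)))]

def SigmaConcaveOn (K N' : ℝ) (I : Set ℝ) (u : ℝ → ℝ) : Prop :=
  ∀ t₀ ∈ I, ∀ t₁ ∈ I, t₀ < t₁ → ∀ s ∈ Icc (0 : ℝ) 1,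
    sigmaCoeff K N' (1 - s) (t₁ - t₀) * ENNReal.ofReal (u t₀) +
        sigmaCoeff K N' s (t₁ - t₀) * ENNReal.ofReal (u t₁) ≤
      ENNReal.ofReal (u ((1 - s) * t₀ + s * t₁))

lemma forall_sigmaCoeff_combination_le_iff {K N' t₀ t₁ : ℝ} {u : ℝ → ℝ} (hN' : 0 < N')
    (h01 : t₀ < t₁) (hsmall : K / N' * (t₁ - t₀) ^ 2 < π ^ 2) (hu : ∀ t ∈ Icc t₀ t₁, 0 ≤ u t) :
    (∀ s ∈ Icc (0 : ℝ) 1,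
        sigmaCoeff K N' (1 - s) (t₁ - t₀) * ENNReal.ofReal (u t₀) +
            sigmaCoeff K N' s (t₁ - t₀) * ENNReal.ofReal (u t₁) ≤
          ENNReal.ofReal (u ((1 - s) * t₀ + s * t₁))) ↔
      ∀ t ∈ Icc t₀ t₁, sinKInterp (K / N') t₀ t₁ (u t₀) (u t₁) t ≤ u t := by
  have hIcc : Icc t₀ t₁ = (fun s => (1 - s) * t₀ + s * t₁) '' Icc 0 1 := by
    rw [← segment_eq_Icc h01.le, segment_eq_image]
    simp only [smul_eq_mul]
  rw [hIcc, forall_mem_image]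
  refine forall₂_congr fun s hs => ?_
  rw [sigmaCoeff_combination_eq hN' h01 hsmall hs (hu _ (left_mem_Icc.2 h01.le))
    (hu _ (right_mem_Icc.2 h01.le)),
    ENNReal.ofReal_le_ofReal_iff (hu _ (hIcc ▸ mem_image_of_mem _ hs))]

theorem sigmaConcaveOn_of_supersolution {K N' : ℝ} {I : Set ℝ} [I.OrdConnected]
    {u u' u'' : ℝ → ℝ} (hN' : 0 < N') (hu : ∀ t ∈ I, HasDerivAt u (u' t) t)
    (hu' : ∀ t ∈ I, HasDerivAt u' (u'' t) t) (hpos : ∀ t ∈ I, 0 < u t)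
    (hsuper : ∀ t ∈ I, u'' t + K / N' * u t ≤ 0) :
    SigmaConcaveOn K N' I u := by
  intro t₀ ht₀ t₁ ht₁ h01
  have hsub : Icc t₀ t₁ ⊆ I := Set.Icc_subset I ht₀ ht₁
  have hsmall := mul_sq_lt_pi_sq_of_supersolution h01.le (fun t ht => hu t (hsub ht))
    (fun t ht => hu' t (hsub ht)) (fun t ht => hpos t (hsub ht)) (fun t ht => hsuper t (hsub ht))
  rw [forall_sigmaCoeff_combination_le_iff hN' h01 hsmall fun t ht => (hpos t (hsub ht)).le]
  exact sinKInterp_le_of_supersolution h01 hsmall (fun t ht => hu t (hsub ht))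
    (fun t ht => hu' t (hsub ht)) (fun t ht => hsuper t (hsub ht))

theorem supersolution_of_sigmaConcaveOn {K N' : ℝ} {I : Set ℝ} (hI : IsOpen I)
    {u u' u'' : ℝ → ℝ} (hN' : 0 < N') (hu : ∀ t ∈ I, HasDerivAt u (u' t) t)
    (hu' : ∀ t ∈ I, HasDerivAt u' (u'' t) t) (hu'' : ContinuousOn u'' I)
    (hpos : ∀ t ∈ I, 0 < u t) (hconc : SigmaConcaveOn K N' I u) :
    ∀ t ∈ I, u'' t + K / N' * u t ≤ 0 := by
  intro c hc
  by_contra! hc'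
  set κ := K / N'
  have hnear : ∀ᶠ t in nhds c, t ∈ I ∧ 0 < u'' t + κ * u t ∧ κ * (2 * (t - c)) ^ 2 < π ^ 2 := by
    have hcont : ContinuousAt (fun t => u'' t + κ * u t) c :=
      (hu''.continuousAt (hI.mem_nhds hc)).add ((hu c hc).continuousAt.const_mul κ)
    refine (hI.eventually_mem hc).and ((continuousAt_const.eventually_lt hcont hc').and ?_)
    exact (Continuous.continuousAt (by fun_prop)).eventually_lt continuousAt_const
      (by simp [pi_pos])
  obtain ⟨ε, hε, hεnear⟩ := (nhds_basis_Icc_pos c).eventually_iff.1 hnear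
  have h01 : c - ε < c + ε := by linarith
  have hsub : Icc (c - ε) (c + ε) ⊆ I := fun t ht => (hεnear ht).1
  have hsmall : κ * (c + ε - (c - ε)) ^ 2 < π ^ 2 := by
    convert (hεnear (right_mem_Icc.2 h01.le)).2.2 using 3
    ring
  set v := sinKInterp κ (c - ε) (c + ε) (u (c - ε)) (u (c + ε))
  have hle := le_sinKInterp_of_subsolution h01 hsmall (fun t ht => hu t (hsub ht))
    (fun t ht => hu' t (hsub ht)) (fun t ht => (hεnear ht).2.1.le)
  have hge := (forall_sigmaCoeff_combination_le_iff hN' h01 hsmall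
    fun t ht => (hpos t (hsub ht)).le).1 (hconc _ (hsub (left_mem_Icc.2 h01.le)) _
    (hsub (right_mem_Icc.2 h01.le)) h01)
  have heq : EqOn u v (Ioo (c - ε) (c + ε)) := fun t ht =>
    le_antisymm (hle t (Ioo_subset_Icc_self ht)) (hge t (Ioo_subset_Icc_self ht))
  obtain ⟨v', hv⟩ := exists_hasDerivAt_sinKInterp κ (c - ε) (c + ε) (u (c - ε)) (u (c + ε))
  have hcmem : c ∈ Ioo (c - ε) (c + ε) := ⟨by linarith, by linarith⟩
  have heq' : EqOn u' v' (Ioo (c - ε) (c + ε)) := fun t ht => by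
    rw [← (hu t (hsub (Ioo_subset_Icc_self ht))).deriv, ← (hv t).1.deriv, heq.deriv isOpen_Ioo ht]
  have hu''c : u'' c = -κ * u c := by
    rw [← (hu' c hc).deriv, heq'.deriv isOpen_Ioo hcmem, (hv c).2.deriv, heq hcmem]
  linarith

theorem stmt_5_general (K N a b : ℝ) (hN : 1 < N)
    (h : ℝ → ℝ) (hpos : ∀ t ∈ Set.Ioo a b, 0 < h t)
    (hC2 : ContDiffOn ℝ 2 h (Set.Ioo a b)) :
    (∀ t ∈ Set.Ioo a b,
        deriv (deriv fun u => h u ^ (1/(N-1))) t + K/(N-1) * h t ^ (1/(N-1)) ≤ 0)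
      ↔ CDconv K N (Set.Ioo a b) h := by
  have hN' : 0 < N - 1 := by linarith
  have huC2 : ContDiffOn ℝ 2 (fun t => h t ^ (1 / (N - 1))) (Ioo a b) :=
    hC2.rpow_const_of_ne fun t ht => (hpos t ht).ne'
  have hu'C1 := huC2.deriv_of_isOpen isOpen_Ioo (m := 1) (by norm_num)
  have hu t (ht : t ∈ Ioo a b) := ((huC2.differentiableOn (by norm_num)).differentiableAt
    (isOpen_Ioo.mem_nhds ht)).hasDerivAt
  have hu' t (ht : t ∈ Ioo a b) := ((hu'C1.differentiableOn one_ne_zero).differentiableAt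
    (isOpen_Ioo.mem_nhds ht)).hasDerivAt
  have hu'' := (hu'C1.deriv_of_isOpen isOpen_Ioo (m := 0) (by norm_num)).continuousOn
  have hupos t (ht : t ∈ Ioo a b) := rpow_pos_of_pos (hpos t ht) (1 / (N - 1))
  exact ⟨sigmaConcaveOn_of_supersolution hN' hu hu' hupos,
    supersolution_of_sigmaConcaveOn isOpen_Ioo hN' hu hu' hu'' hupos⟩

/-- for a positive C² density h on an open interval, the differential inequality
(h^{1/(N−1)})'' + K/(N−1)·h^{1/(N−1)} ≤ 0 is equivalent to the CD(K,N) convexity inequality. -/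
theorem stmt_5 (K N a b : ℝ) (hN : 1 < N) (hab : a < b)
    (h : ℝ → ℝ) (hpos : ∀ t ∈ Set.Ioo a b, 0 < h t)
    (hC2 : ContDiffOn ℝ 2 h (Set.Ioo a b)) :
    (∀ t ∈ Set.Ioo a b,
        deriv (deriv fun u => h u ^ (1/(N-1))) t + K/(N-1) * h t ^ (1/(N-1)) ≤ 0)
      ↔ CDconv K N (Set.Ioo a b) h :=
  stmt_5_general K N a b hN h hpos hC2
end

section
/- Let K > 0, N > 1, and let h : (a,b) → (0,∞) satisfy, for all a < t₀ < t₁ < b, the two-sided bound (sin((b−t₁)√(K/(N−1)))/sin((b−t₀)√(K/(N−1))))^{N−1} ≤ h(t₁)/h(t₀) ≤ (sin((t₁−a)√(K/(N−1)))/sin((t₀−a)√(K/(N−1))))^{N−1}, where b − a ≤ π√((N−1)/K). Then h is locally Lipschitz continuous on (a,b). -/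
/-!
Put `s = √(K / (N - 1))`, `F t = sin ((t - a) s) ^ (N - 1)` and `G t = sin ((b - t) s) ^ (N - 1)`.
Since `(b - a) s ≤ π`, both are positive and `C¹` on `(a, b)`, and the two bounds say exactly
that `h / F` is antitone and `h / G` is monotone there. For `t₀ < t₁` this gives
`h t₁ - h t₀ ≤ (h / F) t₀ * (F t₁ - F t₀)` and `h t₀ - h t₁ ≤ (h / G) t₁ * (G t₀ - G t₁)`.
On a ball `(x - ε, x + ε)` the quotients are bounded by their values at `x ∓ ε`, again by
monotonicity, and `F`, `G` are Lipschitz, so `h` is Lipschitz there.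
-/

open Real Set Metric Filter
open scoped NNReal Topology

lemma le_add_mul_of_div_le_div {u₀ u₁ F₀ F₁ M L : ℝ} (hF₀ : 0 < F₀) (hF₁ : 0 < F₁)
    (hq : 0 ≤ u₀ / F₀) (hM : u₀ / F₀ ≤ M) (hdiv : u₁ / F₁ ≤ u₀ / F₀)
    (hL : F₁ - F₀ ≤ L) (hL0 : 0 ≤ L) : u₁ ≤ u₀ + M * L :=
  calc u₁ = u₁ / F₁ * F₁ := (div_mul_cancel₀ _ hF₁.ne').symm
    _ ≤ u₀ / F₀ * F₁ := by gcongr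
    _ = u₀ + u₀ / F₀ * (F₁ - F₀) := by field_simp; ring
    _ ≤ u₀ + u₀ / F₀ * L := by gcongr
    _ ≤ u₀ + M * L := by gcongr

theorem LipschitzOnWith.of_antitoneOn_div_of_monotoneOn_div {s : Set ℝ} {h F G : ℝ → ℝ}
    {KF KG M : ℝ≥0} (hF : LipschitzOnWith KF F s) (hG : LipschitzOnWith KG G s)
    (hFpos : ∀ t ∈ s, 0 < F t) (hGpos : ∀ t ∈ s, 0 < G t) (hh : ∀ t ∈ s, 0 ≤ h t)
    (hanti : AntitoneOn (fun t ↦ h t / F t) s) (hmono : MonotoneOn (fun t ↦ h t / G t) s)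
    (hMF : ∀ t ∈ s, h t / F t ≤ M) (hMG : ∀ t ∈ s, h t / G t ≤ M) :
    LipschitzOnWith (M * max KF KG) h s := by
  refine LipschitzOnWith.of_le_add_mul _ fun x hx y hy ↦ ?_
  rcases le_total y x with hyx | hxy
  · calc h x ≤ h y + M * (KF * dist x y) :=
          le_add_mul_of_div_le_div (hFpos y hy) (hFpos x hx) (div_nonneg (hh y hy) (hFpos y hy).le)
            (hMF y hy) (hanti hy hx hyx) ((le_abs_self _).trans (hF.dist_le_mul x hx y hy))
            (by positivity)
      _ ≤ h y + M * max KF KG * dist x y := by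
          rw [mul_assoc]; gcongr; exact le_max_left _ _
  · calc h x ≤ h y + M * (KG * dist x y) :=
          le_add_mul_of_div_le_div (hGpos y hy) (hGpos x hx) (div_nonneg (hh y hy) (hGpos y hy).le)
            (hMG y hy) (hmono hx hy hxy) ((le_abs_self _).trans (hG.dist_le_mul x hx y hy))
            (by positivity)
      _ ≤ h y + M * max KF KG * dist x y := by
          rw [mul_assoc]; gcongr; exact le_max_right _ _

lemma antitoneOn_div_of_div_le_div {s : Set ℝ} {h F : ℝ → ℝ} (hh : ∀ t ∈ s, 0 < h t)
    (hF : ∀ t ∈ s, 0 < F t) (hr : ∀ t₀ ∈ s, ∀ t₁ ∈ s, t₀ < t₁ → h t₁ / h t₀ ≤ F t₁ / F t₀) :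
    AntitoneOn (fun t ↦ h t / F t) s := by
  intro t₀ h₀ t₁ h₁ hle
  rcases hle.eq_or_lt with rfl | hlt
  · rfl
  have := hr t₀ h₀ t₁ h₁ hlt
  rw [div_le_div_iff₀ (hh t₀ h₀) (hF t₀ h₀)] at this
  rw [div_le_div_iff₀ (hF t₁ h₁) (hF t₀ h₀)]
  linarith

lemma monotoneOn_div_of_div_le_div {s : Set ℝ} {h G : ℝ → ℝ} (hh : ∀ t ∈ s, 0 < h t)
    (hG : ∀ t ∈ s, 0 < G t) (hr : ∀ t₀ ∈ s, ∀ t₁ ∈ s, t₀ < t₁ → G t₁ / G t₀ ≤ h t₁ / h t₀) :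
    MonotoneOn (fun t ↦ h t / G t) s := by
  intro t₀ h₀ t₁ h₁ hle
  rcases hle.eq_or_lt with rfl | hlt
  · rfl
  have := hr t₀ h₀ t₁ h₁ hlt
  rw [div_le_div_iff₀ (hG t₀ h₀) (hh t₀ h₀)] at this
  rw [div_le_div_iff₀ (hG t₀ h₀) (hG t₁ h₁)]
  linarith

theorem exists_lipschitzOnWith_ball_of_antitoneOn_div {U : Set ℝ} {x : ℝ} (hU : U ∈ 𝓝 x)
    {h F G : ℝ → ℝ} (hFx : ContDiffAt ℝ 1 F x) (hGx : ContDiffAt ℝ 1 G x)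
    (hFpos : ∀ t ∈ U, 0 < F t) (hGpos : ∀ t ∈ U, 0 < G t) (hh : ∀ t ∈ U, 0 ≤ h t)
    (hanti : AntitoneOn (fun t ↦ h t / F t) U) (hmono : MonotoneOn (fun t ↦ h t / G t) U) :
    ∃ ε > 0, ∃ C : ℝ≥0, LipschitzOnWith C h (ball x ε) := by
  obtain ⟨KF, VF, hVF, hFlip⟩ := hFx.exists_lipschitzOnWith
  obtain ⟨KG, VG, hVG, hGlip⟩ := hGx.exists_lipschitzOnWith
  obtain ⟨δ, hδ, hδsub⟩ := Metric.mem_nhds_iff.1 (inter_mem hU (inter_mem hVF hVG))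
  set ε := δ / 2
  have hε : 0 < ε := half_pos hδ
  have hcl : closedBall x ε ⊆ U ∩ (VF ∩ VG) :=
    (closedBall_subset_ball (half_lt_self hδ)).trans hδsub
  have hball : ball x ε ⊆ U ∩ (VF ∩ VG) := ball_subset_closedBall.trans hcl
  have hlo : x - ε ∈ U := (hcl (by rw [Real.closedBall_eq_Icc]; constructor <;> linarith)).1
  have hhi : x + ε ∈ U := (hcl (by rw [Real.closedBall_eq_Icc]; constructor <;> linarith)).1
  set M := (max (h (x - ε) / F (x - ε)) (h (x + ε) / G (x + ε))).toNNReal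
  refine ⟨ε, hε, M * max KF KG,
    LipschitzOnWith.of_antitoneOn_div_of_monotoneOn_div
      (hFlip.mono fun t ht ↦ (hball ht).2.1) (hGlip.mono fun t ht ↦ (hball ht).2.2)
      (fun t ht ↦ hFpos t (hball ht).1) (fun t ht ↦ hGpos t (hball ht).1)
      (fun t ht ↦ hh t (hball ht).1) (hanti.mono fun t ht ↦ (hball ht).1)
      (hmono.mono fun t ht ↦ (hball ht).1) (fun t ht ↦ ?_) (fun t ht ↦ ?_)⟩
  all_goals have htU := hball ht; rw [Real.ball_eq_Ioo] at ht
  · calc h t / F t ≤ h (x - ε) / F (x - ε) := hanti hlo htU.1 ht.1.le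
      _ ≤ M := (le_max_left _ _).trans (Real.le_coe_toNNReal _)
  · calc h t / G t ≤ h (x + ε) / G (x + ε) := hmono htU.1 hhi ht.2.le
      _ ≤ M := (le_max_right _ _).trans (Real.le_coe_toNNReal _)

theorem stmt_6_general (K N a b : ℝ) (hK : 0 < K) (hN : 1 < N)
    (hD : b - a ≤ Real.pi * Real.sqrt ((N - 1) / K))
    (h : ℝ → ℝ) (hpos : ∀ t ∈ Set.Ioo a b, 0 < h t)
    (hbound : ∀ t₀ ∈ Set.Ioo a b, ∀ t₁ ∈ Set.Ioo a b, t₀ < t₁ →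
      (Real.sin ((b - t₁) * Real.sqrt (K / (N - 1))) /
        Real.sin ((b - t₀) * Real.sqrt (K / (N - 1)))) ^ (N - 1) ≤ h t₁ / h t₀ ∧
      h t₁ / h t₀ ≤ (Real.sin ((t₁ - a) * Real.sqrt (K / (N - 1))) /
        Real.sin ((t₀ - a) * Real.sqrt (K / (N - 1)))) ^ (N - 1)) :
    ∀ x ∈ Set.Ioo a b, ∃ ε > 0, ∃ C : NNReal,
      LipschitzOnWith C h (Set.Ioo a b ∩ Metric.ball x ε) := by
  set s := √(K / (N - 1))
  have hs : 0 < s := sqrt_pos.2 (div_pos hK (sub_pos.2 hN))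
  have hπ : (b - a) * s ≤ π :=
    calc (b - a) * s ≤ π * √((N - 1) / K) * s := by gcongr
      _ = π := by
        have hinv : (N - 1) / K * (K / (N - 1)) = 1 := by
          field_simp [(sub_pos.2 hN).ne']
        rw [mul_assoc, ← sqrt_mul (by positivity), hinv, sqrt_one, mul_one]
  have hsin : ∀ u, 0 < u → u < b - a → 0 < sin (u * s) := fun u hu₀ hu₁ ↦
    sin_pos_of_pos_of_lt_pi (by positivity) (by nlinarith)
  have hsinF : ∀ t ∈ Ioo a b, 0 < sin ((t - a) * s) := fun t ht ↦
    hsin _ (by linarith [ht.1]) (by linarith [ht.2])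
  have hsinG : ∀ t ∈ Ioo a b, 0 < sin ((b - t) * s) := fun t ht ↦
    hsin _ (by linarith [ht.2]) (by linarith [ht.1])
  have hanti : AntitoneOn (fun t ↦ h t / sin ((t - a) * s) ^ (N - 1)) (Ioo a b) :=
    antitoneOn_div_of_div_le_div hpos (fun t ht ↦ rpow_pos_of_pos (hsinF t ht) _)
      fun t₀ h₀ t₁ h₁ hlt ↦ by
        rw [← div_rpow (hsinF t₁ h₁).le (hsinF t₀ h₀).le]; exact (hbound t₀ h₀ t₁ h₁ hlt).2
  have hmono : MonotoneOn (fun t ↦ h t / sin ((b - t) * s) ^ (N - 1)) (Ioo a b) :=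
    monotoneOn_div_of_div_le_div hpos (fun t ht ↦ rpow_pos_of_pos (hsinG t ht) _)
      fun t₀ h₀ t₁ h₁ hlt ↦ by
        rw [← div_rpow (hsinG t₁ h₁).le (hsinG t₀ h₀).le]; exact (hbound t₀ h₀ t₁ h₁ hlt).1
  intro x hx
  obtain ⟨ε, hε, C, hC⟩ := exists_lipschitzOnWith_ball_of_antitoneOn_div (Ioo_mem_nhds hx.1 hx.2)
    ((by fun_prop : ContDiff ℝ 1 fun t ↦ sin ((t - a) * s)).contDiffAt.rpow_const_of_ne
      (hsinF x hx).ne')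
    ((by fun_prop : ContDiff ℝ 1 fun t ↦ sin ((b - t) * s)).contDiffAt.rpow_const_of_ne
      (hsinG x hx).ne')
    (fun t ht ↦ rpow_pos_of_pos (hsinF t ht) _) (fun t ht ↦ rpow_pos_of_pos (hsinG t ht) _)
    (fun t ht ↦ (hpos t ht).le) hanti hmono
  exact ⟨ε, hε, C, hC.mono inter_subset_right⟩

/-- a positive function on (a,b) (with b−a ≤ π√((N−1)/K), K>0, N>1) satisfying the
two-sided sine-ratio bounds is locally Lipschitz on (a,b). -/
theorem stmt_6 (K N a b : ℝ) (hK : 0 < K) (hN : 1 < N) (hab : a < b)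
    (hD : b - a ≤ Real.pi * Real.sqrt ((N - 1) / K))
    (h : ℝ → ℝ) (hpos : ∀ t ∈ Set.Ioo a b, 0 < h t)
    (hbound : ∀ t₀ ∈ Set.Ioo a b, ∀ t₁ ∈ Set.Ioo a b, t₀ < t₁ →
      (Real.sin ((b - t₁) * Real.sqrt (K / (N - 1))) /
        Real.sin ((b - t₀) * Real.sqrt (K / (N - 1)))) ^ (N - 1) ≤ h t₁ / h t₀ ∧
      h t₁ / h t₀ ≤ (Real.sin ((t₁ - a) * Real.sqrt (K / (N - 1))) /
        Real.sin ((t₀ - a) * Real.sqrt (K / (N - 1)))) ^ (N - 1)) :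
    ∀ x ∈ Set.Ioo a b, ∃ ε > 0, ∃ C : NNReal,
      LipschitzOnWith C h (Set.Ioo a b ∩ Metric.ball x ε) :=
  stmt_6_general K N a b hK hN hD h hpos hbound
end

section
/- Let K ∈ ℝ, N ∈ (1,∞), and let h : [A₀, A₁+L₁] → (0,∞) be continuous and satisfy, for all sufficiently small L₀,L₁ > 0 and all A₀ < A₁ in the domain, the inequality (L₀+L₁)^{1/N} h((A₀+A₁)/2)^{1/N} ≥ σ_{K,N−1}^{(1/2)}(A₁−A₀)^{(N−1)/N} [L₀^{1/N} h(A₀)^{1/N} + L₁^{1/N} h(A₁)^{1/N}]. Then, optimizing over L₀, L₁ (choosing L_i proportional to h(A_i)^{1/(N−1)}), one obtains the midpoint inequality h((A₀+A₁)/2)^{1/(N−1)} ≥ σ_{K,N−1}^{(1/2)}(A₁−A₀) [h(A₀)^{1/(N−1)} + h(A₁)^{1/(N−1)}]. -/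
/-!
Choose `Lᵢ = c · h(Aᵢ)^{1/(N-1)}` with `c > 0` small and put
`S = h(A₀)^{1/(N-1)} + h(A₁)^{1/(N-1)}`. Each term `Lᵢ^{1/N} h(Aᵢ)^{1/N}` becomes
`c^{1/N} h(Aᵢ)^{1/(N-1)}`, so after cancelling `c^{1/N}` the hypothesis reads
`σ^{(N-1)/N} S ≤ S^{1/N} h(mid)^{1/N}`, i.e. `(σ S)^{(N-1)/N} ≤ h(mid)^{1/N}`; raising to the power
`N/(N-1)` gives the midpoint inequality.
-/

open Real

lemma mul_rpow_mul_rpow_self {c x : ℝ} (hc : 0 ≤ c) (hx : 0 < x) (p q : ℝ) :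
    (c * x ^ p) ^ q * x ^ q = c ^ q * x ^ ((p + 1) * q) := by
  rw [mul_rpow hc (rpow_nonneg hx.le p), ← rpow_mul hx.le, mul_assoc, ← rpow_add hx]
  ring_nf

lemma div_add_mul_lt {L a b : ℝ} (hL : 0 < L) (ha : 0 ≤ a) (hb : 0 < b) :
    L / (a + b) * a < L := by
  rw [div_mul_eq_mul_div, div_lt_iff₀ (by positivity)]
  nlinarith

lemma le_rpow_div_of_rpow_mul_le {r q σ S m : ℝ} (hr : 0 < r) (hrq : r + q = 1) (hσ : 0 ≤ σ)
    (hS : 0 < S) (hm : 0 ≤ m) (H : σ ^ r * S ≤ S ^ q * m ^ q) : σ * S ≤ m ^ (q / r) := by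
  have hsplit : σ ^ r * S = (σ * S) ^ r * S ^ q := by
    rw [mul_rpow hσ hS.le, mul_assoc, ← rpow_add hS, hrq, rpow_one]
  have hpow : (σ * S) ^ r ≤ m ^ q := by
    rw [hsplit, mul_comm (S ^ q)] at H
    exact le_of_mul_le_mul_right H (rpow_pos_of_pos hS q)
  rw [div_eq_mul_inv, rpow_mul hm]
  exact (le_rpow_inv_iff_of_pos (by positivity) (by positivity) hr).mpr hpow

theorem stmt_17_general (N : ℝ) (hN : 1 < N) (σ : ℝ) (hσ : 0 ≤ σ)
    (h : ℝ → ℝ) (hpos : ∀ t, 0 < h t)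
    (A₀ A₁ : ℝ)
    (hyp : ∃ Lbar > 0, ∀ L₀ ∈ Set.Ioo (0:ℝ) Lbar, ∀ L₁ ∈ Set.Ioo (0:ℝ) Lbar,
      σ ^ ((N - 1) / N) *
          (L₀ ^ (1 / N) * h A₀ ^ (1 / N) + L₁ ^ (1 / N) * h A₁ ^ (1 / N)) ≤
        (L₀ + L₁) ^ (1 / N) * h ((A₀ + A₁) / 2) ^ (1 / N)) :
    σ * (h A₀ ^ (1 / (N - 1)) + h A₁ ^ (1 / (N - 1))) ≤
      h ((A₀ + A₁) / 2) ^ (1 / (N - 1)) := by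
  obtain ⟨Lbar, hLbar, H⟩ := hyp
  have hx := hpos A₀
  have hy := hpos A₁
  have hN₁ : N - 1 ≠ 0 := by linarith
  set a := h A₀ ^ (1 / (N - 1))
  set b := h A₁ ^ (1 / (N - 1))
  have ha : 0 < a := by positivity
  have hb : 0 < b := by positivity
  set c := Lbar / (a + b)
  have hc : 0 < c := by positivity
  have H' := H (c * a) ⟨by positivity, div_add_mul_lt hLbar ha.le hb⟩
    (c * b) ⟨by positivity, by simpa only [add_comm b a] using div_add_mul_lt hLbar hb.le ha⟩
  have hexp : (1 / (N - 1) + 1) * (1 / N) = 1 / (N - 1) := by field_simp; ring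
  rw [mul_rpow_mul_rpow_self hc.le hx, mul_rpow_mul_rpow_self hc.le hy, hexp, ← mul_add,
    ← mul_add, mul_rpow hc.le (by positivity), mul_left_comm, mul_assoc (c ^ _)] at H'
  have hscaled := le_of_mul_le_mul_left H' (rpow_pos_of_pos hc _)
  have hqr : 1 / N / ((N - 1) / N) = 1 / (N - 1) := by field_simp
  rw [← hqr]
  exact le_rpow_div_of_rpow_mul_le (by positivity) (by field_simp; ring) hσ (by positivity)
    (hpos _).le hscaled

/-- optimization over L₀, L₁. If a positive density h satisfies, for all sufficiently
small L₀, L₁ > 0, the inequality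
(L₀+L₁)^{1/N} h((A₀+A₁)/2)^{1/N} ≥ σ^{(N−1)/N} (L₀^{1/N} h(A₀)^{1/N} + L₁^{1/N} h(A₁)^{1/N})
(where σ = σ_{K,N−1}^{(1/2)}(A₁−A₀) ≥ 0), then choosing L_i proportional to h(A_i)^{1/(N−1)}
yields the midpoint inequality h((A₀+A₁)/2)^{1/(N−1)} ≥ σ (h(A₀)^{1/(N−1)} + h(A₁)^{1/(N−1)}). -/
theorem stmt_17 (N : ℝ) (hN : 1 < N) (σ : ℝ) (hσ : 0 ≤ σ)
    (h : ℝ → ℝ) (hpos : ∀ t, 0 < h t)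
    (A₀ A₁ : ℝ) (hA : A₀ < A₁)
    (hyp : ∃ Lbar > 0, ∀ L₀ ∈ Set.Ioo (0:ℝ) Lbar, ∀ L₁ ∈ Set.Ioo (0:ℝ) Lbar,
      σ ^ ((N - 1) / N) *
          (L₀ ^ (1 / N) * h A₀ ^ (1 / N) + L₁ ^ (1 / N) * h A₁ ^ (1 / N)) ≤
        (L₀ + L₁) ^ (1 / N) * h ((A₀ + A₁) / 2) ^ (1 / N)) :
    σ * (h A₀ ^ (1 / (N - 1)) + h A₁ ^ (1 / (N - 1))) ≤
      h ((A₀ + A₁) / 2) ^ (1 / (N - 1)) :=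
  stmt_17_general N hN σ hσ h hpos A₀ A₁ hyp
end
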